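/- Let n and k be integers with 1 ≤ k < n, and let w : (0,∞) → ℝ be measurable with ∫₀^∞ s^{n−k−1} |w(s)| ds < ∞. Define ψ(r) = c_{k,n} r^{2−n} ∫₀^r s^{n−k−1} w(s) (r² − s²)^{k/2 − 1} ds (defined for those r > 0 at which the integral converges absolutely, which is almost every r > 0), define w̃(s) = s^{(n−k)/2 − 1} w(√s) and λ(s) = (1/(s Γ(k/2 + 1))) ∫₀^{s²} (s² − r)^{k/2} w̃(r) dr for s > 0. Then for every x ∈ ℝⁿ with x ≠ 0, the integral ψ̃(x) = ∫₁^∞ ψ(|x|/t) t^{−(1+n)} dt converges absolutely and ψ̃(x) = c₁ |x|^{1−n} λ(|x|), where c₁ = π^{k/2} σ_{n−k−1} / (2 σ_{n−1}). -/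

import Mathlib

/-!
Substituting `u = |x|/t` turns `ψ̃(x)` into `|x|^{-n} ∫₀^{|x|} ψ(u) u^{n-1} du`, and
`u^{n-1} ψ(u) = c_{k,n} u ∫₀^u g(s) (u² - s²)^p ds` with `g(s) = s^{n-k-1} w(s)`, `p = k/2 - 1`.
The kernel `g(s) u (u² - s²)^p` on the triangle `0 < s < u < |x|` is absolutely integrable as soon
as `g` is, so Fubini and `∫_s^R u (u² - s²)^p du = (R² - s²)^{p+1} / (2(p+1))` give
`ψ̃(x) = c_{k,n} |x|^{-n} k⁻¹ ∫₀^{|x|} g(s) (|x|² - s²)^{k/2} ds`. The substitution `r = s²` turns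
the integral defining `λ(|x|)` into twice the same integral, and `Γ(k/2 + 1) = (k/2) Γ(k/2)`
matches the constants.
-/

open MeasureTheory

/-- `sphereVol m` is the surface area `σ_{m-1} = 2 π^{m/2} / Γ(m/2)` of the unit
sphere in `ℝ^m`. -/
noncomputable def sphereVol (m : ℕ) : ℝ := 2 * Real.pi ^ ((m : ℝ) / 2) / Real.Gamma ((m : ℝ) / 2)

/-- The constant `c_{k,n} = σ_{k-1} σ_{n-k-1} / σ_{n-1}`. -/
noncomputable def radonConst (k n : ℕ) : ℝ := sphereVol k * sphereVol (n - k) / sphereVol n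

open Set

section ChangeOfVariables

variable {s R : ℝ}

lemma image_sq_sub_sq_Ioo (hs : 0 ≤ s) (hsR : s < R) :
    (fun u => u ^ 2 - s ^ 2) '' Ioo s R = Ioo 0 (R ^ 2 - s ^ 2) := by
  ext v
  constructor
  · rintro ⟨u, ⟨hsu, huR⟩, rfl⟩
    constructor <;> nlinarith
  · rintro ⟨hv, hvR⟩
    refine ⟨√(v + s ^ 2), ⟨(Real.lt_sqrt hs).mpr (by linarith),
      (Real.sqrt_lt' (by linarith)).mpr (by linarith)⟩, ?_⟩
    dsimp only
    rw [Real.sq_sqrt (by positivity)]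
    ring

lemma injOn_sq_sub_sq_Ioo (hs : 0 ≤ s) : InjOn (fun u => u ^ 2 - s ^ 2) (Ioo s R) :=
  fun _ ha _ hb hab => (pow_left_strictMonoOn₀ two_ne_zero).injOn (hs.trans ha.1.le)
    (hs.trans hb.1.le) (sub_left_injective hab)

lemma hasDerivWithinAt_sq_sub_sq (T : Set ℝ) (u : ℝ) :
    HasDerivWithinAt (fun u => u ^ 2 - s ^ 2) (2 * u) T u := by
  simpa using ((hasDerivAt_pow 2 u).sub_const (s ^ 2)).hasDerivWithinAt

theorem integrableOn_Ioo_mul_comp_sq_sub_sq_iff (hs : 0 ≤ s) (hsR : s < R) (f : ℝ → ℝ) :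
    IntegrableOn (fun u => u * f (u ^ 2 - s ^ 2)) (Ioo s R) ↔
      IntegrableOn f (Ioo 0 (R ^ 2 - s ^ 2)) := by
  rw [← image_sq_sub_sq_Ioo hs hsR, integrableOn_image_iff_integrableOn_abs_deriv_smul
    measurableSet_Ioo (fun u _ => hasDerivWithinAt_sq_sub_sq _ u) (injOn_sq_sub_sq_Ioo hs),
    IntegrableOn, IntegrableOn, ← integrable_const_mul_iff (isUnit_of_invertible (2 : ℝ))]
  refine integrable_congr ((ae_restrict_mem measurableSet_Ioo).mono fun u hu => ?_)
  dsimp only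
  rw [smul_eq_mul, abs_of_pos (by linarith [hs.trans_lt hu.1])]
  ring

theorem integral_Ioo_comp_sq_sub_sq (hs : 0 ≤ s) (hsR : s < R) (f : ℝ → ℝ) :
    ∫ u in Ioo s R, 2 * u * f (u ^ 2 - s ^ 2) = ∫ v in Ioo 0 (R ^ 2 - s ^ 2), f v := by
  rw [← image_sq_sub_sq_Ioo hs hsR, integral_image_eq_integral_abs_deriv_smul
    measurableSet_Ioo (fun u _ => hasDerivWithinAt_sq_sub_sq _ u) (injOn_sq_sub_sq_Ioo hs)]
  refine setIntegral_congr_fun measurableSet_Ioo fun u hu => ?_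
  rw [smul_eq_mul, abs_of_pos (by linarith [hs.trans_lt hu.1])]

theorem integral_Ioo_sq_comp (hR : 0 < R) (f : ℝ → ℝ) :
    ∫ v in Ioo 0 (R ^ 2), f v = ∫ u in Ioo 0 R, 2 * u * f (u ^ 2) := by
  simpa using (integral_Ioo_comp_sq_sub_sq le_rfl hR f).symm

theorem integrableOn_Ioo_mul_rpow_sq_sub_sq {p : ℝ} (hp : -1 < p) (hs : 0 ≤ s) (hsR : s < R) :
    IntegrableOn (fun u => u * (u ^ 2 - s ^ 2) ^ p) (Ioo s R) :=
  (integrableOn_Ioo_mul_comp_sq_sub_sq_iff hs hsR (· ^ p)).mpr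
    ((intervalIntegral.intervalIntegrable_rpow' hp).1.mono_set Ioo_subset_Ioc_self)

theorem integral_Ioo_mul_rpow_sq_sub_sq {p : ℝ} (hp : -1 < p) (hs : 0 ≤ s) (hsR : s < R) :
    ∫ u in Ioo s R, u * (u ^ 2 - s ^ 2) ^ p = (R ^ 2 - s ^ 2) ^ (p + 1) / (2 * (p + 1)) := by
  have hT : 0 ≤ R ^ 2 - s ^ 2 := by nlinarith
  have hval : ∫ v in Ioo 0 (R ^ 2 - s ^ 2), v ^ p = (R ^ 2 - s ^ 2) ^ (p + 1) / (p + 1) := by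
    rw [← integral_Ioc_eq_integral_Ioo, ← intervalIntegral.integral_of_le hT,
      integral_rpow (Or.inl hp), Real.zero_rpow (by linarith), sub_zero]
  have h := integral_Ioo_comp_sq_sub_sq hs hsR (· ^ p)
  simp only [mul_assoc, integral_const_mul, hval] at h
  rw [eq_div_iff (by linarith)] at h ⊢
  linear_combination h

lemma image_div_Ioi_one (hR : 0 < R) : (fun t => R / t) '' Ioi 1 = Ioo 0 R := by
  ext u
  constructor
  · rintro ⟨t, ht, rfl⟩
    exact ⟨div_pos hR (one_pos.trans ht), div_lt_self hR ht⟩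
  · rintro ⟨hu, huR⟩
    exact ⟨R / u, (one_lt_div hu).mpr huR, div_div_cancel₀ hR.ne'⟩

lemma injOn_div_Ioi_one (hR : 0 < R) : InjOn (fun t => R / t) (Ioi 1) :=
  fun _ _ _ _ hab => inv_injective (mul_left_cancel₀ hR.ne' hab)

lemma hasDerivWithinAt_const_div {t : ℝ} (ht : t ≠ 0) (T : Set ℝ) :
    HasDerivWithinAt (fun t => R / t) (-(R / t ^ 2)) T t := by
  simpa [div_eq_mul_inv] using ((hasDerivAt_inv ht).const_mul R).hasDerivWithinAt

lemma abs_deriv_div_mul_comp {a t : ℝ} (hR : 0 < R) (ht : 0 < t) (y : ℝ) :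
    |-(R / t ^ 2)| * (y * (R / t) ^ (a - 1)) = R ^ a * (y * t ^ (-1 - a)) := by
  have hRa : R ^ a = R * R ^ (a - 1) := by
    rw [mul_comm, ← Real.rpow_add_one hR.ne', sub_add_cancel]
  have hta : t ^ (-1 - a) = (t ^ 2 * t ^ (a - 1))⁻¹ := by
    rw [← Real.rpow_natCast, ← Real.rpow_add ht, ← Real.rpow_neg ht.le]
    congr 1
    push_cast
    ring
  rw [abs_neg, abs_of_pos (by positivity), Real.div_rpow hR.le ht.le, hRa, hta]
  field_simp

theorem integrableOn_Ioi_one_comp_div_iff (hR : 0 < R) (a : ℝ) (f : ℝ → ℝ) :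
    IntegrableOn (fun t => f (R / t) * t ^ (-1 - a)) (Ioi 1) ↔
      IntegrableOn (fun u => f u * u ^ (a - 1)) (Ioo 0 R) := by
  rw [← image_div_Ioi_one hR, integrableOn_image_iff_integrableOn_abs_deriv_smul
    measurableSet_Ioi (fun t ht => hasDerivWithinAt_const_div (one_pos.trans ht).ne' _)
    (injOn_div_Ioi_one hR), IntegrableOn, IntegrableOn,
    ← integrable_const_mul_iff (Real.rpow_pos_of_pos hR a).ne'.isUnit]
  refine integrable_congr ((ae_restrict_mem measurableSet_Ioi).mono fun t ht => ?_)
  dsimp only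
  rw [smul_eq_mul, abs_deriv_div_mul_comp hR (one_pos.trans ht)]

theorem integral_Ioi_one_comp_div (hR : 0 < R) (a : ℝ) (f : ℝ → ℝ) :
    ∫ t in Ioi 1, f (R / t) * t ^ (-1 - a) = R ^ (-a) * ∫ u in Ioo 0 R, f u * u ^ (a - 1) := by
  rw [← image_div_Ioi_one hR, integral_image_eq_integral_abs_deriv_smul
    measurableSet_Ioi (fun t ht => hasDerivWithinAt_const_div (one_pos.trans ht).ne' _)
    (injOn_div_Ioi_one hR), ← integral_const_mul]
  refine setIntegral_congr_fun measurableSet_Ioi fun t ht => ?_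
  rw [smul_eq_mul, abs_deriv_div_mul_comp hR (one_pos.trans ht), ← mul_assoc,
    ← Real.rpow_add hR, neg_add_cancel, Real.rpow_zero, one_mul]

end ChangeOfVariables

section AbelKernel

variable {g : ℝ → ℝ} {p R s u : ℝ}

noncomputable def abelKernel (g : ℝ → ℝ) (p : ℝ) : ℝ × ℝ → ℝ :=
  {q | q.1 < q.2}.indicator fun q => g q.1 * (q.2 * (q.2 ^ 2 - q.1 ^ 2) ^ p)

lemma abelKernel_slice_fst (s : ℝ) :
    (fun u => abelKernel g p (s, u)) = (Ioi s).indicator fun u => g s * (u * (u ^ 2 - s ^ 2) ^ p) :=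
  rfl

lemma abelKernel_slice_snd (u : ℝ) :
    (fun s => abelKernel g p (s, u)) = (Iio u).indicator fun s => g s * (u * (u ^ 2 - s ^ 2) ^ p) :=
  rfl

lemma norm_abelKernel (hs : 0 ≤ s) (u : ℝ) :
    ‖abelKernel g p (s, u)‖ = abelKernel (fun s => |g s|) p (s, u) := by
  simp only [abelKernel, indicator_apply, mem_ofPred_eq]
  split_ifs with h
  · have hsq : 0 ≤ u ^ 2 - s ^ 2 := by nlinarith
    rw [Real.norm_eq_abs, abs_mul, abs_mul, abs_of_nonneg (hs.trans h.le),
      abs_of_nonneg (Real.rpow_nonneg hsq p)]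
  · exact norm_zero

theorem integrable_abelKernel_slice_fst (hp : -1 < p) (hs : 0 ≤ s) (hsR : s < R) :
    Integrable (fun u => abelKernel g p (s, u)) (volume.restrict (Ioo 0 R)) := by
  rw [abelKernel_slice_fst, integrable_indicator_iff measurableSet_Ioi, IntegrableOn,
    Measure.restrict_restrict measurableSet_Ioi, Ioi_inter_Ioo, max_eq_left hs]
  exact (integrableOn_Ioo_mul_rpow_sq_sub_sq hp hs hsR).const_mul (g s)

theorem integral_abelKernel_slice_fst (hp : -1 < p) (hs : 0 ≤ s) (hsR : s < R) :
    ∫ u in Ioo 0 R, abelKernel g p (s, u) = g s * ((R ^ 2 - s ^ 2) ^ (p + 1) / (2 * (p + 1))) := by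
  rw [abelKernel_slice_fst, integral_indicator measurableSet_Ioi,
    Measure.restrict_restrict measurableSet_Ioi, Ioi_inter_Ioo, max_eq_left hs,
    integral_const_mul, integral_Ioo_mul_rpow_sq_sub_sq hp hs hsR]

theorem integrable_abelKernel_slice_snd_iff (hu : 0 < u) (huR : u ≤ R) :
    Integrable (fun s => abelKernel g p (s, u)) (volume.restrict (Ioo 0 R)) ↔
      IntegrableOn (fun s => g s * (u ^ 2 - s ^ 2) ^ p) (Ioo 0 u) := by
  rw [abelKernel_slice_snd, integrable_indicator_iff measurableSet_Iio, IntegrableOn,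
    Measure.restrict_restrict measurableSet_Iio, Iio_inter_Ioo, min_eq_left huR]
  simp only [mul_left_comm (g _) u]
  exact integrable_const_mul_iff hu.ne'.isUnit _

theorem integral_abelKernel_slice_snd (huR : u ≤ R) :
    ∫ s in Ioo 0 R, abelKernel g p (s, u) = u * ∫ s in Ioo 0 u, g s * (u ^ 2 - s ^ 2) ^ p := by
  rw [abelKernel_slice_snd, integral_indicator measurableSet_Iio,
    Measure.restrict_restrict measurableSet_Iio, Iio_inter_Ioo, min_eq_left huR,
    ← integral_const_mul]
  simp only [mul_left_comm]

theorem integrable_abelKernel (hp : -1 < p) (hg : IntegrableOn g (Ioo 0 R)) :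
    Integrable (abelKernel g p) ((volume.restrict (Ioo 0 R)).prod (volume.restrict (Ioo 0 R))) := by
  have hmeas : AEStronglyMeasurable (abelKernel g p)
      ((volume.restrict (Ioo 0 R)).prod (volume.restrict (Ioo 0 R))) :=
    (hg.aestronglyMeasurable.comp_fst.mul (by fun_prop : Measurable fun q : ℝ × ℝ =>
      q.2 * (q.2 ^ 2 - q.1 ^ 2) ^ p).aestronglyMeasurable).indicator
      (measurableSet_lt measurable_fst measurable_snd)
  refine (integrable_prod_iff hmeas).mpr ⟨?_, ?_⟩
  · filter_upwards [ae_restrict_mem measurableSet_Ioo] with s hs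
    exact integrable_abelKernel_slice_fst hp hs.1.le hs.2
  · -- the slice norms `|g s| (R² - s²)^(p+1) / (2(p+1))` are dominated by `C |g s|`
    refine (hg.norm.mul_const ((R ^ 2) ^ (p + 1) / (2 * (p + 1)))).mono'
      hmeas.norm.integral_prod_right' ?_
    filter_upwards [ae_restrict_mem measurableSet_Ioo] with s hs
    have hsq : 0 ≤ R ^ 2 - s ^ 2 := by nlinarith [hs.1, hs.2]
    simp only [norm_abelKernel hs.1.le]
    rw [integral_abelKernel_slice_fst hp hs.1.le hs.2, Real.norm_eq_abs,
      abs_of_nonneg (mul_nonneg (abs_nonneg _) (div_nonneg (Real.rpow_nonneg hsq _) (by linarith))),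
      Real.norm_eq_abs]
    gcongr <;> nlinarith

theorem ae_integrableOn_rpow_sq_sub_sq (hp : -1 < p) (hg : IntegrableOn g (Ioo 0 R)) :
    ∀ᵐ u ∂volume.restrict (Ioo 0 R),
      IntegrableOn (fun s => g s * (u ^ 2 - s ^ 2) ^ p) (Ioo 0 u) := by
  filter_upwards [ae_restrict_mem measurableSet_Ioo, (integrable_abelKernel hp hg).prod_left_ae]
    with u hu hint
  exact (integrable_abelKernel_slice_snd_iff hu.1 hu.2.le).mp hint

theorem integrableOn_mul_integral_rpow_sq_sub_sq (hp : -1 < p) (hg : IntegrableOn g (Ioo 0 R)) :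
    IntegrableOn (fun u => u * ∫ s in Ioo 0 u, g s * (u ^ 2 - s ^ 2) ^ p) (Ioo 0 R) :=
  (integrable_abelKernel hp hg).integral_prod_right.congr <|
    (ae_restrict_mem measurableSet_Ioo).mono fun _ hu => integral_abelKernel_slice_snd hu.2.le

theorem integral_mul_integral_rpow_sq_sub_sq (hp : -1 < p) (hg : IntegrableOn g (Ioo 0 R)) :
    ∫ u in Ioo 0 R, u * ∫ s in Ioo 0 u, g s * (u ^ 2 - s ^ 2) ^ p =
      (2 * (p + 1))⁻¹ * ∫ s in Ioo 0 R, g s * (R ^ 2 - s ^ 2) ^ (p + 1) := by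
  calc _ = ∫ u in Ioo 0 R, ∫ s in Ioo 0 R, abelKernel g p (s, u) :=
        setIntegral_congr_fun measurableSet_Ioo fun u hu =>
          (integral_abelKernel_slice_snd hu.2.le).symm
    _ = ∫ s in Ioo 0 R, ∫ u in Ioo 0 R, abelKernel g p (s, u) :=
        integral_integral_swap (f := fun u s => abelKernel g p (s, u))
          (integrable_abelKernel hp hg).swap
    _ = ∫ s in Ioo 0 R, (2 * (p + 1))⁻¹ * (g s * (R ^ 2 - s ^ 2) ^ (p + 1)) :=
        setIntegral_congr_fun measurableSet_Ioo fun s hs => by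
          rw [integral_abelKernel_slice_fst hp hs.1.le hs.2]
          ring
    _ = _ := integral_const_mul _ _

end AbelKernel

section RadialIntegral

variable {g ψ : ℝ → ℝ} {p a c R : ℝ}

theorem ae_eq_mul_integral_rpow_sq_sub_sq (hp : -1 < p) (hg : IntegrableOn g (Ioo 0 R))
    (hψ : ∀ r, 0 < r → IntegrableOn (fun s => g s * (r ^ 2 - s ^ 2) ^ p) (Ioo 0 r) →
      ψ r = c * r ^ (2 - a) * ∫ s in Ioo 0 r, g s * (r ^ 2 - s ^ 2) ^ p) :
    (fun u => ψ u * u ^ (a - 1)) =ᵐ[volume.restrict (Ioo 0 R)]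
      fun u => c * (u * ∫ s in Ioo 0 u, g s * (u ^ 2 - s ^ 2) ^ p) := by
  filter_upwards [ae_restrict_mem measurableSet_Ioo, ae_integrableOn_rpow_sq_sub_sq hp hg]
    with u hu hint
  have hpow : u ^ (2 - a) * u ^ (a - 1) = u := by
    rw [← Real.rpow_add hu.1, show 2 - a + (a - 1) = 1 by ring, Real.rpow_one]
  rw [hψ u hu.1 hint]
  linear_combination (c * ∫ s in Ioo 0 u, g s * (u ^ 2 - s ^ 2) ^ p) * hpow

theorem integrableOn_Ioi_one_comp_div_of_eq_integral (hR : 0 < R) (hp : -1 < p)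
    (hg : IntegrableOn g (Ioo 0 R))
    (hψ : ∀ r, 0 < r → IntegrableOn (fun s => g s * (r ^ 2 - s ^ 2) ^ p) (Ioo 0 r) →
      ψ r = c * r ^ (2 - a) * ∫ s in Ioo 0 r, g s * (r ^ 2 - s ^ 2) ^ p) :
    IntegrableOn (fun t => ψ (R / t) * t ^ (-1 - a)) (Ioi 1) := by
  rw [integrableOn_Ioi_one_comp_div_iff hR,
    integrableOn_congr_fun_ae (ae_eq_mul_integral_rpow_sq_sub_sq hp hg hψ)]
  exact (integrableOn_mul_integral_rpow_sq_sub_sq hp hg).const_mul c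

theorem integral_Ioi_one_comp_div_of_eq_integral (hR : 0 < R) (hp : -1 < p)
    (hg : IntegrableOn g (Ioo 0 R))
    (hψ : ∀ r, 0 < r → IntegrableOn (fun s => g s * (r ^ 2 - s ^ 2) ^ p) (Ioo 0 r) →
      ψ r = c * r ^ (2 - a) * ∫ s in Ioo 0 r, g s * (r ^ 2 - s ^ 2) ^ p) :
    ∫ t in Ioi 1, ψ (R / t) * t ^ (-1 - a) =
      R ^ (-a) * (c * ((2 * (p + 1))⁻¹ * ∫ s in Ioo 0 R, g s * (R ^ 2 - s ^ 2) ^ (p + 1))) := by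
  rw [integral_Ioi_one_comp_div hR, integral_congr_ae (ae_eq_mul_integral_rpow_sq_sub_sq hp hg hψ),
    integral_const_mul, integral_mul_integral_rpow_sq_sub_sq hp hg]

end RadialIntegral

theorem integral_Ioo_sq_sub_rpow_mul_comp_sqrt {R : ℝ} (hR : 0 < R) (b q : ℝ) (w : ℝ → ℝ) :
    ∫ r in Ioo 0 (R ^ 2), (R ^ 2 - r) ^ q * (r ^ (b / 2 - 1) * w √r) =
      2 * ∫ s in Ioo 0 R, s ^ (b - 1) * w s * (R ^ 2 - s ^ 2) ^ q := by
  rw [integral_Ioo_sq_comp hR, ← integral_const_mul]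
  refine setIntegral_congr_fun measurableSet_Ioo fun s hs => ?_
  have hs2 : s * (s ^ 2) ^ (b / 2 - 1) = s ^ (b - 1) := by
    rw [← Real.rpow_natCast, ← Real.rpow_mul hs.1.le, mul_comm s, ← Real.rpow_add_one hs.1.ne']
    congr 1
    push_cast
    ring
  rw [Real.sqrt_sq hs.1.le, ← hs2]
  ring

/-- Identity (eq:260129-11): `ψ̃(x) = ∫₁^∞ ψ(|x|/t) t^{-(1+n)} dt` converges absolutely
and equals `c₁ |x|^{1-n} λ(|x|)` with `c₁ = π^{k/2} σ_{n-k-1} / (2 σ_{n-1})`. -/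
theorem stmt_14 (n k : ℕ) (hk : 1 ≤ k) (hkn : k < n) (w : ℝ → ℝ) (hw : Measurable w)
    (hI : IntegrableOn (fun s => s ^ ((n : ℝ) - k - 1) * |w s|) (Set.Ioi 0))
    (ψ : ℝ → ℝ)
    (hψ : ∀ r : ℝ, 0 < r →
      IntegrableOn
        (fun s => s ^ ((n : ℝ) - k - 1) * w s * (r ^ 2 - s ^ 2) ^ ((k : ℝ) / 2 - 1))
        (Set.Ioo 0 r) →
      ψ r = radonConst k n * r ^ ((2 : ℝ) - n) *
        ∫ s in Set.Ioo 0 r, s ^ ((n : ℝ) - k - 1) * w s * (r ^ 2 - s ^ 2) ^ ((k : ℝ) / 2 - 1))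
    (wt lam : ℝ → ℝ)
    (hwt : ∀ s : ℝ, wt s = s ^ (((n : ℝ) - k) / 2 - 1) * w (Real.sqrt s))
    (hlam : ∀ s : ℝ, 0 < s → lam s =
      1 / (s * Real.Gamma ((k : ℝ) / 2 + 1)) *
        ∫ r in Set.Ioo 0 (s ^ 2), (s ^ 2 - r) ^ ((k : ℝ) / 2) * wt r)
    (x : EuclideanSpace ℝ (Fin n)) (hx : x ≠ 0) :
    IntegrableOn (fun t => ψ (‖x‖ / t) * t ^ (-(1 : ℝ) - n)) (Set.Ioi 1) ∧
    ∫ t in Set.Ioi 1, ψ (‖x‖ / t) * t ^ (-(1 : ℝ) - n)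
      = Real.pi ^ ((k : ℝ) / 2) * sphereVol (n - k) / (2 * sphereVol n) *
          (‖x‖ ^ ((1 : ℝ) - n) * lam ‖x‖) := by
  have hR : 0 < ‖x‖ := norm_pos_iff.mpr hx
  have hk0 : (0 : ℝ) < k / 2 := div_pos (Nat.cast_pos.mpr hk) two_pos
  have hp : -1 < (k : ℝ) / 2 - 1 := by linarith
  have hg : IntegrableOn (fun s => s ^ ((n : ℝ) - k - 1) * w s) (Ioo 0 ‖x‖) := by
    refine (hI.mono_set Ioo_subset_Ioi_self).mono' (by fun_prop) ?_
    filter_upwards [ae_restrict_mem measurableSet_Ioo] with s hs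
    rw [norm_mul, Real.norm_eq_abs, Real.norm_eq_abs, abs_of_pos (Real.rpow_pos_of_pos hs.1 _)]
  refine ⟨integrableOn_Ioi_one_comp_div_of_eq_integral hR hp hg hψ, ?_⟩
  rw [integral_Ioi_one_comp_div_of_eq_integral hR hp hg hψ, hlam _ hR]
  simp only [hwt]
  rw [integral_Ioo_sq_sub_rpow_mul_comp_sqrt hR, sub_add_cancel,
    show ‖x‖ ^ ((1 : ℝ) - n) = ‖x‖ * ‖x‖ ^ (-(n : ℝ)) by
      rw [sub_eq_add_neg, Real.rpow_add hR, Real.rpow_one],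
    radonConst, show sphereVol k = 2 * Real.pi ^ ((k : ℝ) / 2) / Real.Gamma ((k : ℝ) / 2) from rfl,
    Real.Gamma_add_one hk0.ne']
  have hΓ : Real.Gamma ((k : ℝ) / 2) ≠ 0 := (Real.Gamma_pos_of_pos hk0).ne'
  have hn : 0 < n := Nat.zero_lt_of_lt hkn
  have hσn : sphereVol n ≠ 0 :=
    (div_pos (by positivity) (Real.Gamma_pos_of_pos (by positivity))).ne'
  field_simp
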